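/- arXiv:2405.07086 — 6 statements merged into one kernel-verified Lean document; each statement's English description precedes it below -/
import Mathlib

section
/- Suppose the system {F_i}_{i=0}^{n} is linearly independent as functions on [0,1] (i.e., if ∑_{i=0}^{n} c_i F_i(t) = 0 for all t ∈ [0,1] then all c_i = 0), that F_0(0) = 1, F_i(0) = 0 for i = 1,…,n, F_n(1) = 1, F_i(1) = 0 for i = 0,…,n−1, and that φ(0) = 0 and φ(1) = 1. Then for every σ ∈ (0,1], the system {T_i}_{i=0}^{n} is linearly independent as functions on [0,1]: if ∑_{i=0}^{n} c_i T_i(t) = 0 for all t ∈ [0,1], then c_i = 0 for all i = 0,…,n. -/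
/-!
At `t = 0` only `T₀` survives and at `t = 1` only `Tₙ` survives, both with value `1`, so a vanishing
combination `∑ cᵢ Tᵢ` has `c₀ = cₙ = 0`. The remaining terms are `σ cᵢ Fᵢ`, so `σ ∑ cᵢ Fᵢ` vanishes on
`[0, 1]`, and `σ ≠ 0` together with the independence of the `Fᵢ` forces all `cᵢ = 0`.
-/

open Finset

theorem Finset.sum_mul_eq_of_eq_boole {ι R : Type*} [NonAssocSemiring R] [DecidableEq ι]
    {s : Finset ι} {c f : ι → R} {j : ι} (hj : j ∈ s)
    (hf : ∀ i ∈ s, f i = if j = i then 1 else 0) :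
    ∑ i ∈ s, c i * f i = c j := by
  rw [sum_congr rfl fun i hi => by rw [hf i hi], sum_mul_boole, if_pos hj]

section Blend

variable {n : ℕ} {F T : ℕ → ℝ → ℝ} {φ : ℝ → ℝ} {σ : ℝ}

theorem blend_apply_zero
    (hT0 : ∀ t, T 0 t = (1 - σ) * (1 - φ t) + σ * F 0 t)
    (hTi : ∀ i, 1 ≤ i → i ≤ n - 1 → ∀ t, T i t = σ * F i t)
    (hTn : ∀ t, T n t = (1 - σ) * φ t + σ * F n t)
    (hF00 : F 0 0 = 1) (hF0i : ∀ i, 1 ≤ i → i ≤ n → F i 0 = 0) (hφ0 : φ 0 = 0) :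
    ∀ i ∈ range (n + 1), T i 0 = if 0 = i then 1 else 0 := by
  intro i hi
  rw [mem_range] at hi
  obtain rfl | hi0 := Nat.eq_zero_or_pos i
  · rw [hT0, hφ0, hF00, if_pos rfl]; ring
  rw [if_neg hi0.ne]
  obtain rfl | hin := eq_or_ne i n
  · rw [hTn, hφ0, hF0i i hi0 le_rfl]; ring
  · rw [hTi i hi0 (by omega), hF0i i hi0 (by omega), mul_zero]

theorem blend_apply_one
    (hT0 : ∀ t, T 0 t = (1 - σ) * (1 - φ t) + σ * F 0 t)
    (hTi : ∀ i, 1 ≤ i → i ≤ n - 1 → ∀ t, T i t = σ * F i t)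
    (hTn : ∀ t, T n t = (1 - σ) * φ t + σ * F n t)
    (hFn1 : F n 1 = 1) (hF1i : ∀ i, i ≤ n - 1 → F i 1 = 0) (hφ1 : φ 1 = 1) :
    ∀ i ∈ range (n + 1), T i 1 = if n = i then 1 else 0 := by
  intro i hi
  rw [mem_range] at hi
  obtain rfl | hin := eq_or_ne i n
  · rw [hTn, hφ1, hFn1, if_pos rfl]; ring
  rw [if_neg hin.symm]
  obtain rfl | hi0 := Nat.eq_zero_or_pos i
  · rw [hT0, hφ1, hF1i 0 (Nat.zero_le _)]; ring
  · rw [hTi i hi0 (by omega), hF1i i (by omega), mul_zero]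

theorem sum_mul_blend_eq_mul_sum
    (hTi : ∀ i, 1 ≤ i → i ≤ n - 1 → ∀ t, T i t = σ * F i t)
    {c : ℕ → ℝ} (hc0 : c 0 = 0) (hcn : c n = 0) (t : ℝ) :
    ∑ i ∈ range (n + 1), c i * T i t = σ * ∑ i ∈ range (n + 1), c i * F i t := by
  rw [mul_sum]
  refine sum_congr rfl fun i hi => ?_
  rw [mem_range] at hi
  obtain rfl | hi0 := Nat.eq_zero_or_pos i
  · rw [hc0]; ring
  obtain rfl | hin := eq_or_ne i n
  · rw [hcn]; ring
  · rw [hTi i hi0 (by omega)]; ring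

end Blend

theorem stmt_5_general (n : ℕ) (F T : ℕ → ℝ → ℝ) (φ : ℝ → ℝ)
    (σ : ℝ) (hσ : σ ∈ Set.Ioc (0:ℝ) 1)
    (hT0 : ∀ t, T 0 t = (1 - σ) * (1 - φ t) + σ * F 0 t)
    (hTi : ∀ i, 1 ≤ i → i ≤ n - 1 → ∀ t, T i t = σ * F i t)
    (hTn : ∀ t, T n t = (1 - σ) * φ t + σ * F n t)
    (hFli : ∀ c : ℕ → ℝ,
      (∀ t ∈ Set.Icc (0:ℝ) 1, ∑ i ∈ Finset.range (n + 1), c i * F i t = 0) →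
      ∀ i ≤ n, c i = 0)
    (hF00 : F 0 0 = 1) (hF0i : ∀ i, 1 ≤ i → i ≤ n → F i 0 = 0)
    (hFn1 : F n 1 = 1) (hF1i : ∀ i, i ≤ n - 1 → F i 1 = 0)
    (hφ0 : φ 0 = 0) (hφ1 : φ 1 = 1) :
    ∀ c : ℕ → ℝ,
      (∀ t ∈ Set.Icc (0:ℝ) 1, ∑ i ∈ Finset.range (n + 1), c i * T i t = 0) →
      ∀ i ≤ n, c i = 0 := by
  intro c hc
  have hc0 : c 0 = 0 := by
    rw [← sum_mul_eq_of_eq_boole (c := c) (by simp) (blend_apply_zero hT0 hTi hTn hF00 hF0i hφ0)]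
    exact hc 0 (Set.left_mem_Icc.mpr zero_le_one)
  have hcn : c n = 0 := by
    rw [← sum_mul_eq_of_eq_boole (c := c) (by simp) (blend_apply_one hT0 hTi hTn hFn1 hF1i hφ1)]
    exact hc 1 (Set.right_mem_Icc.mpr zero_le_one)
  refine hFli c fun t ht => ?_
  have hσF := hc t ht
  rw [sum_mul_blend_eq_mul_sum hTi hc0 hcn] at hσF
  exact (mul_eq_zero.mp hσF).resolve_left hσ.1.ne'

theorem stmt_5 (n : ℕ) (hn : 1 ≤ n) (F T : ℕ → ℝ → ℝ) (φ : ℝ → ℝ)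
    (σ : ℝ) (hσ : σ ∈ Set.Ioc (0:ℝ) 1)
    (hT0 : ∀ t, T 0 t = (1 - σ) * (1 - φ t) + σ * F 0 t)
    (hTi : ∀ i, 1 ≤ i → i ≤ n - 1 → ∀ t, T i t = σ * F i t)
    (hTn : ∀ t, T n t = (1 - σ) * φ t + σ * F n t)
    (hFli : ∀ c : ℕ → ℝ,
      (∀ t ∈ Set.Icc (0:ℝ) 1, ∑ i ∈ Finset.range (n + 1), c i * F i t = 0) →
      ∀ i ≤ n, c i = 0)
    (hF00 : F 0 0 = 1) (hF0i : ∀ i, 1 ≤ i → i ≤ n → F i 0 = 0)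
    (hFn1 : F n 1 = 1) (hF1i : ∀ i, i ≤ n - 1 → F i 1 = 0)
    (hφ0 : φ 0 = 0) (hφ1 : φ 1 = 1) :
    ∀ c : ℕ → ℝ,
      (∀ t ∈ Set.Icc (0:ℝ) 1, ∑ i ∈ Finset.range (n + 1), c i * T i t = 0) →
      ∀ i ≤ n, c i = 0 :=
  stmt_5_general n F T φ σ hσ hT0 hTi hTn hFli hF00 hF0i hFn1 hF1i hφ0 hφ1
end

section
/- Let n ≥ 2, let x_0 < x_1 < ⋯ < x_n be real numbers, let f_0 ≤ f_1 ≤ ⋯ ≤ f_n be real numbers, and let s be any real number with 0 < s < min{(x_{i+1} − x_i)/2 : i = 0,…,n−1}. Define g_i = f_i and z_i = f_{i+1} for i = 0,…,n−1; t_i = x_{i+1} − s for i = 0,…,n−2 and t_{n−1} = x_{n−1} + 2s; h_i = x_i + s for i = 1,…,n−1 and h_0 = x_1 − 2s. Then these values satisfy all the constraints: t_i + h_{i+1} = 2x_{i+1} and z_i + g_{i+1} = 2f_{i+1} for i = 0,…,n−2; x_i < h_i < t_i < x_{i+1} for i = 0,…,n−1; and f_i ≤ g_i ≤ z_i ≤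 f_{i+1} for i = 0,…,n−1. -/
theorem stmt_10 (n : ℕ) (hn : 2 ≤ n) (x f : ℕ → ℝ)
    (hx : ∀ i < n, x i < x (i + 1)) (hf : ∀ i < n, f i ≤ f (i + 1))
    (s : ℝ) (hs0 : 0 < s) (hs : ∀ i < n, s < (x (i + 1) - x i) / 2)
    (h t g z : ℕ → ℝ)
    (hg : ∀ i < n, g i = f i) (hz : ∀ i < n, z i = f (i + 1))
    (ht : ∀ i, i + 2 ≤ n → t i = x (i + 1) - s)
    (htn : t (n - 1) = x (n - 1) + 2 * s)
    (hh : ∀ i, 1 ≤ i → i ≤ n - 1 → h i = x i + s)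
    (hh0 : h 0 = x 1 - 2 * s) :
    (∀ i, i + 2 ≤ n → t i + h (i + 1) = 2 * x (i + 1)) ∧
    (∀ i, i + 2 ≤ n → z i + g (i + 1) = 2 * f (i + 1)) ∧
    (∀ i < n, x i < h i ∧ h i < t i ∧ t i < x (i + 1)) ∧
    (∀ i < n, f i ≤ g i ∧ g i ≤ z i ∧ z i ≤ f (i + 1)) := by
  refine ⟨?_, ?_, ?_, ?_⟩
  · intro i hi
    rw [ht i hi, hh (i + 1) (by omega) (by omega)]
    ring
  · intro i hi
    rw [hz i (by omega), hg (i + 1) (by omega)]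
    ring
  · intro i hin
    have hsi := hs i hin
    have h2s : 2 * s < x (i + 1) - x i := by linarith
    by_cases hi0 : i = 0
    · subst hi0
      have ht0 : t 0 = x 1 - s := ht 0 hn
      rw [hh0, ht0]
      refine ⟨by linarith, by linarith, by linarith⟩
    · have h1i : 1 ≤ i := Nat.one_le_iff_ne_zero.mpr hi0
      have hhi : h i = x i + s := hh i h1i (by omega)
      by_cases hil : i + 2 ≤ n
      · rw [hhi, ht i hil]
        refine ⟨by linarith, by linarith, by linarith⟩
      · have : i = n - 1 := by omega
        subst this
        rw [hhi, htn]
        have : n - 1 + 1 = n := by omega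
        rw [this] at h2s ⊢
        refine ⟨by linarith, by linarith, by linarith⟩
  · intro i hin
    rw [hg i hin, hz i hin]
    exact ⟨le_refl _, hf i hin, le_refl _⟩
end

section
/- Let n ≥ 2, let x_0 < x_1 < ⋯ < x_n be real numbers and let f_0 ≤ f_1 ≤ ⋯ ≤ f_n be real numbers. Then there exist real numbers h_i, t_i, w_i, d_i, g_i, z_i, k_i, c_i for i = 0,…,n−1 such that: d_i + h_{i+1} = 2x_{i+1}, c_i + g_{i+1} = 2f_{i+1}, 2d_i − 2h_{i+1} = w_i − t_{i+1}, and 2c_i − 2g_{i+1} = k_i − z_{i+1} for i = 0,…,n−2; x_i < h_i < t_i < w_i < d_i < x_{i+1} for i = 0,…,n−1; and f_i ≤ g_i ≤ z_i ≤ k_i ≤ c_i ≤ f_{i+1} for i = 0,…,n−1. -/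
theorem stmt_11 (n : ℕ) (hn : 2 ≤ n) (x f : ℕ → ℝ)
    (hx : ∀ i < n, x i < x (i + 1)) (hf : ∀ i < n, f i ≤ f (i + 1)) :
    ∃ h t w d g z k c : ℕ → ℝ,
      (∀ i, i + 2 ≤ n → d i + h (i + 1) = 2 * x (i + 1)) ∧
      (∀ i, i + 2 ≤ n → c i + g (i + 1) = 2 * f (i + 1)) ∧
      (∀ i, i + 2 ≤ n → 2 * d i - 2 * h (i + 1) = w i - t (i + 1)) ∧
      (∀ i, i + 2 ≤ n → 2 * c i - 2 * g (i + 1) = k i - z (i + 1)) ∧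
      (∀ i < n, x i < h i ∧ h i < t i ∧ t i < w i ∧ w i < d i ∧ d i < x (i + 1)) ∧
      (∀ i < n, f i ≤ g i ∧ g i ≤ z i ∧ z i ≤ k i ∧ k i ≤ c i ∧ c i ≤ f (i + 1)) := by
  have hne : (Finset.range n).Nonempty := ⟨0, Finset.mem_range.mpr (by omega)⟩
  set δ : ℝ := (Finset.range n).inf' hne (fun j => x (j + 1) - x j) with hδ
  have hδpos : 0 < δ := by
    rw [hδ, Finset.lt_inf'_iff]
    intro j hj
    have := hx j (Finset.mem_range.mp hj)
    linarith
  have hδle : ∀ i < n, δ ≤ x (i + 1) - x i := by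
    intro i hi
    exact Finset.inf'_le _ (Finset.mem_range.mpr hi)
  set ε : ℝ := δ / 5 with hε
  refine ⟨fun i => x i + ε, fun i => x i + 2 * ε, fun i => x (i + 1) - 2 * ε,
    fun i => x (i + 1) - ε, f, f, fun i => f (i + 1), fun i => f (i + 1),
    fun i _ => by ring, fun i _ => by ring, fun i _ => by ring, fun i _ => by ring,
    ?_, ?_⟩
  · intro i hi
    have h1 := hδle i hi
    have hεpos : 0 < ε := by positivity
    have : 4 * ε < x (i + 1) - x i := by
      rw [hε]; linarith
    refine ⟨?_, ?_, ?_, ?_, ?_⟩ <;> (beta_reduce; linarith)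
  · intro i hi
    have := hf i hi
    exact ⟨le_refl _, le_refl _, this, le_refl _, le_refl _⟩
end

section
/- Let n ≥ 2, let x_0 < x_1 < ⋯ < x_n be real numbers, let f_0 ≤ f_1 ≤ ⋯ ≤ f_n be real numbers, and let s be a real number with 0 < s < min{(x_1 − x_0)/3, (x_n − x_{n−1})/3, (x_{i+1} − x_i)/2 for i = 1,…,n−2}. Define g_i = z_i = f_i and k_i = c_i = f_{i+1} for i = 0,…,n−1; w_i = x_{i+1} − s for i = 0,…,n−2 and w_{n−1} = x_{n−1} + 2s; t_i = x_i + s for i = 1,…,n−1 and t_0 = x_1 − 2s; h_0 = x_1 − 3s and d_{n−1} = x_{n−1} + 3s; and for i = 0,…,n−2 set d_i = x_{i+1} + (w_i − t_{i+1})/4 and h_{i+1} = x_{i+1} − (w_i − t_{i+1})/4. Then these values satisfy all the constraints: d_i + h_{i+1} = 2x_{i+1}, c_i + g_{i+1} = 2f_{i+1}, 2d_i − 2h_{i+1} = w_i − t_{i+1}, 2c_i − 2g_{i+1} = k_i − z_{i+1} for i = 0,…,n−2; x_i < h_i < t_i < w_i < d_i < x_{i+1} for i = 0,…,n−1; and f_i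 ≤ g_i ≤ z_i ≤ k_i ≤ c_i ≤ f_{i+1} for i = 0,…,n−1. -/
theorem stmt_12 (n : ℕ) (hn : 2 ≤ n) (x f : ℕ → ℝ)
    (hx : ∀ i < n, x i < x (i + 1)) (hf : ∀ i < n, f i ≤ f (i + 1))
    (s : ℝ) (hs0 : 0 < s)
    (hs1 : s < (x 1 - x 0) / 3) (hsn : s < (x n - x (n - 1)) / 3)
    (hsi : ∀ i, 1 ≤ i → i ≤ n - 2 → s < (x (i + 1) - x i) / 2)
    (h t w d g z k c : ℕ → ℝ)
    (hg : ∀ i < n, g i = f i) (hzv : ∀ i < n, z i = f i)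
    (hk : ∀ i < n, k i = f (i + 1)) (hc : ∀ i < n, c i = f (i + 1))
    (hw : ∀ i, i + 2 ≤ n → w i = x (i + 1) - s)
    (hwn : w (n - 1) = x (n - 1) + 2 * s)
    (htv : ∀ i, 1 ≤ i → i ≤ n - 1 → t i = x i + s)
    (ht0 : t 0 = x 1 - 2 * s)
    (hh0 : h 0 = x 1 - 3 * s)
    (hdn : d (n - 1) = x (n - 1) + 3 * s)
    (hd : ∀ i, i + 2 ≤ n → d i = x (i + 1) + (w i - t (i + 1)) / 4)
    (hhv : ∀ i, i + 2 ≤ n → h (i + 1) = x (i + 1) - (w i - t (i + 1)) / 4) :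
    (∀ i, i + 2 ≤ n → d i + h (i + 1) = 2 * x (i + 1)) ∧
    (∀ i, i + 2 ≤ n → c i + g (i + 1) = 2 * f (i + 1)) ∧
    (∀ i, i + 2 ≤ n → 2 * d i - 2 * h (i + 1) = w i - t (i + 1)) ∧
    (∀ i, i + 2 ≤ n → 2 * c i - 2 * g (i + 1) = k i - z (i + 1)) ∧
    (∀ i < n, x i < h i ∧ h i < t i ∧ t i < w i ∧ w i < d i ∧ d i < x (i + 1)) ∧
    (∀ i < n, f i ≤ g i ∧ g i ≤ z i ∧ z i ≤ k i ∧ k i ≤ c i ∧ c i ≤ f (i + 1)) := by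
  have key : ∀ i, i + 2 ≤ n → w i - t (i + 1) = -(2 * s) := by
    intro i hi
    rw [hw i hi, htv (i + 1) (by omega) (by omega)]
    ring
  refine ⟨?_, ?_, ?_, ?_, ?_, ?_⟩
  · intro i hi; rw [hd i hi, hhv i hi]; ring
  · intro i hi; rw [hc i (by omega), hg (i + 1) (by omega)]; ring
  · intro i hi; rw [hd i hi, hhv i hi]; ring
  · intro i hi
    rw [hc i (by omega), hg (i + 1) (by omega), hk i (by omega), hzv (i + 1) (by omega)]
    ring
  · intro i hi
    rcases Nat.eq_zero_or_pos i with h0 | hpos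
    · subst h0
      have hw0 := hw 0 (by omega)
      have hd0 := hd 0 (by omega)
      have hk0 := key 0 (by omega)
      rw [hw0, hd0, hk0, hh0, ht0]
      refine ⟨by linarith, by linarith, by linarith, by linarith, by linarith⟩
    · have hhi : h i = x i + s / 2 := by
        have h1 := hhv (i - 1) (by omega)
        have h2 := key (i - 1) (by omega)
        have e : i - 1 + 1 = i := by omega
        rw [e] at h1 h2
        rw [h1, h2]; ring
      have hti : t i = x i + s := htv i hpos (by omega)
      by_cases hlast : i = n - 1
      · subst hlast
        have e : n - 1 + 1 = n := by omega
        have hxn : x (n - 1) + 3 * s < x (n - 1 + 1) := by rw [e]; linarith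
        rw [hhi, hti, hwn, hdn]
        refine ⟨by linarith, by linarith, by linarith, by linarith, hxn⟩
      · have hi2 : i + 2 ≤ n := by omega
        have hwi := hw i hi2
        have hdi := hd i hi2
        have hki := key i hi2
        have hs2 := hsi i hpos (by omega)
        rw [hhi, hti, hwi, hdi, hki]
        refine ⟨by linarith, by linarith, by linarith, by linarith, by linarith⟩
  · intro i hi
    rw [hg i hi, hzv i hi, hk i hi, hc i hi]
    exact ⟨le_refl _, le_refl _, hf i hi, le_refl _, le_refl _⟩
end

section
/- Let n ≥ 3 be an odd integer and k = ⌊n/2⌋ = (n−1)/2, and define the auxiliary polynomial φ(t) = ∑_{j=k+1}^{n} B_{n,j}(t). Then φ satisfies all the conditions of an auxiliary function: φ(0) = 0, φ(1) = 1, φ(t) + φ(1−t) = 1 for all t ∈ ℝ, and φ'(0) = φ'(1) = 0. -/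
/-!
The polynomial `φ` is the sum of the upper half of the Bernstein basis of odd degree `n = 2k + 1`.
The substitution `t ↦ 1 - t` sends `B_{n,j}` to `B_{n,n-j}`, so it exchanges the upper half with the
lower half, and the two halves together form the partition of unity `∑ⱼ B_{n,j} = 1`. Every upper
index is at least `k + 1 ≥ 2`, so each `B_{n,j}` vanishes to second order at `0`, giving `φ(0) = 0`
and `φ'(0) = 0`; the symmetry transports both facts to `1`.
-/

open Polynomial Finset

namespace bernsteinPolynomial

variable (R : Type*) [CommRing R]

theorem sum_Icc_comp_one_sub (n k : ℕ) :
    (∑ j ∈ Icc (k + 1) n, bernsteinPolynomial R n j).comp (1 - X) =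
      ∑ j ∈ range (n - k), bernsteinPolynomial R n j := by
  rw [Polynomial.sum_comp]
  refine sum_nbij' (n - ·) (n - ·) ?_ ?_ ?_ ?_ ?_
  all_goals intro j hj; simp only [mem_Icc, mem_range] at hj ⊢
  all_goals try omega
  exact flip R n j hj.2

theorem sum_range_add_sum_Icc {n k : ℕ} (hkn : k ≤ n) :
    ∑ j ∈ range (k + 1), bernsteinPolynomial R n j +
      ∑ j ∈ Icc (k + 1) n, bernsteinPolynomial R n j = 1 := by
  rw [← Ico_add_one_right_eq_Icc, sum_range_add_sum_Ico _ (by omega), sum]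

theorem sum_Icc_comp_one_sub_add_self {n k : ℕ} (hn : n = 2 * k + 1) :
    (∑ j ∈ Icc (k + 1) n, bernsteinPolynomial R n j).comp (1 - X) +
      ∑ j ∈ Icc (k + 1) n, bernsteinPolynomial R n j = 1 := by
  rw [sum_Icc_comp_one_sub, show n - k = k + 1 by omega, sum_range_add_sum_Icc R (by omega)]

theorem eval_zero_sum_Icc (n k : ℕ) :
    (∑ j ∈ Icc (k + 1) n, bernsteinPolynomial R n j).eval 0 = 0 := by
  rw [eval_finsetSum]
  refine sum_eq_zero fun j hj => ?_
  rw [eval_at_0, if_neg (by simp only [mem_Icc] at hj; omega)]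

theorem eval_one_sum_Icc {n k : ℕ} (hkn : k < n) :
    (∑ j ∈ Icc (k + 1) n, bernsteinPolynomial R n j).eval 1 = 1 := by
  rw [eval_finsetSum, sum_eq_single_of_mem n (by simp; omega)]
  · simp [eval_at_1]
  · intro j _ hjn
    rw [eval_at_1, if_neg hjn]

theorem derivative_sum_Icc_eval_zero {n k : ℕ} (hk : 1 ≤ k) :
    (derivative (∑ j ∈ Icc (k + 1) n, bernsteinPolynomial R n j)).eval 0 = 0 := by
  rw [derivative_sum, eval_finsetSum]
  refine sum_eq_zero fun j hj => ?_
  have hj2 : 1 < j := by simp only [mem_Icc] at hj; omega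
  simpa using iterate_derivative_at_0_eq_zero_of_lt R n hj2

end bernsteinPolynomial

theorem deriv_one_eq_deriv_zero_of_add_comp_one_sub {f : ℝ → ℝ} {c : ℝ}
    (hf : ∀ t, f t + f (1 - t) = c) : deriv f 1 = deriv f 0 := by
  have hf' : f = fun t => c - f (1 - t) := funext fun t => by linarith [hf t]
  rw [hf', deriv_const_sub, deriv_comp_const_sub, ← hf', sub_self, neg_neg]

open bernsteinPolynomial in
theorem stmt_14 (n : ℕ) (hn : 3 ≤ n) (hodd : Odd n) (k : ℕ) (hk : k = n / 2)
    (φ : ℝ → ℝ)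
    (hφ : φ = fun t : ℝ => ∑ j ∈ Finset.Icc (k + 1) n,
      (n.choose j : ℝ) * t ^ j * (1 - t) ^ (n - j)) :
    φ 0 = 0 ∧ φ 1 = 1 ∧ (∀ t : ℝ, φ t + φ (1 - t) = 1) ∧
      deriv φ 0 = 0 ∧ deriv φ 1 = 0 := by
  have hnk : n = 2 * k + 1 := by obtain ⟨m, rfl⟩ := hodd; omega
  have hφM : φ = fun t => (∑ j ∈ Icc (k + 1) n, bernsteinPolynomial ℝ n j).eval t := by
    simp [hφ, eval_finsetSum, bernsteinPolynomial]
  have hsymm (t : ℝ) : φ t + φ (1 - t) = 1 := by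
    have := congr_arg (eval t) (sum_Icc_comp_one_sub_add_self ℝ hnk)
    rw [eval_add, eval_comp, eval_sub, eval_one, eval_X] at this
    rw [hφM, add_comm, this]
  have hderiv0 : deriv φ 0 = 0 := by
    rw [hφM, Polynomial.deriv, derivative_sum_Icc_eval_zero ℝ (by omega)]
  refine ⟨?_, ?_, hsymm, hderiv0, ?_⟩
  · exact hφM ▸ eval_zero_sum_Icc ℝ n k
  · exact hφM ▸ eval_one_sum_Icc ℝ (by omega)
  · rw [deriv_one_eq_deriv_zero_of_add_comp_one_sub hsymm, hderiv0]
end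

section
/- Let n ≥ 2 be an even integer and k = n/2. Then for all t ∈ ℝ, (1/2)·B_{n,k}(t) + ∑_{j=k+1}^{n} B_{n,j}(t) = ∑_{j=k}^{n−1} B_{n−1,j}(t); that is, the degree-n expression on the left simplifies to a polynomial of degree n−1. -/
/-!
Pascal's rule `B_{n+1,j+1} = (1 - t) B_{n,j+1} + t B_{n,j}` turns the upper tail
`∑_{j > k} B_{n+1,j}` into `∑_{j > k} B_{n,j} + t B_{n,k}`. For `n + 1 = 2k` the symmetry
`C(2k-1, k-1) = C(2k-1, k)` gives `B_{2k,k} = 2 (1 - t) B_{2k-1,k}`, so half of the central term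
supplies the missing `(1 - t) B_{2k-1,k}`.
-/

open Finset Polynomial

namespace bernsteinPolynomial

variable {R : Type*} [CommRing R]

theorem succ_succ (n ν : ℕ) :
    bernsteinPolynomial R (n + 1) (ν + 1) =
      (1 - X) * bernsteinPolynomial R n (ν + 1) + X * bernsteinPolynomial R n ν := by
  simp only [bernsteinPolynomial, Nat.choose_succ_succ, Nat.add_sub_add_right, Nat.cast_add]
  rcases lt_or_ge ν n with hν | hν
  · rw [show n - ν = n - (ν + 1) + 1 by omega]
    ring
  · rw [Nat.choose_eq_zero_of_lt (Nat.lt_succ_of_le hν)]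
    ring

theorem sum_Icc_succ (n k : ℕ) :
    ∑ j ∈ Icc (k + 1) (n + 1), bernsteinPolynomial R (n + 1) j =
      ∑ j ∈ Icc (k + 1) n, bernsteinPolynomial R n j + X * bernsteinPolynomial R n k := by
  rcases lt_or_ge n k with hkn | hkn
  · rw [Icc_eq_empty (by omega), Icc_eq_empty (by omega), eq_zero_of_lt R hkn]
    simp
  have hshift : Icc (k + 1) (n + 1) = (Icc k n).map (addRightEmbedding 1) := by
    rw [map_add_right_Icc]
  have htop : ∑ j ∈ Icc k n, bernsteinPolynomial R n (j + 1) =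
      ∑ j ∈ Icc (k + 1) n, bernsteinPolynomial R n j := by
    rw [← add_zero (∑ j ∈ Icc (k + 1) n, _), ← eq_zero_of_lt R n.lt_succ_self,
      ← sum_Icc_succ_top (by omega), hshift, sum_map]
    rfl
  have hbot : ∑ j ∈ Icc k n, bernsteinPolynomial R n j =
      bernsteinPolynomial R n k + ∑ j ∈ Icc (k + 1) n, bernsteinPolynomial R n j := by
    rw [← insert_Icc_add_one_left_eq_Icc hkn, sum_insert (by simp)]
  rw [hshift, sum_map]
  simp only [addRightEmbedding_apply, succ_succ, sum_add_distrib, ← mul_sum, htop, hbot]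
  ring

theorem central_two_mul_add_two (k : ℕ) :
    bernsteinPolynomial R (2 * k + 2) (k + 1) =
      2 * (1 - X) * bernsteinPolynomial R (2 * k + 1) (k + 1) := by
  have hflip : X * bernsteinPolynomial R (2 * k + 1) k =
      (1 - X) * bernsteinPolynomial R (2 * k + 1) (k + 1) := by
    simp only [bernsteinPolynomial]
    rw [← Nat.choose_symm_half k, show 2 * k + 1 - k = k + 1 by omega,
      show 2 * k + 1 - (k + 1) = k by omega]
    ring
  rw [succ_succ, hflip]
  ring

end bernsteinPolynomial

theorem stmt_15 (n : ℕ) (hn : 2 ≤ n) (heven : Even n) (k : ℕ) (hk : k = n / 2) :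
    ∀ t : ℝ,
      (1 / 2) * ((n.choose k : ℝ) * t ^ k * (1 - t) ^ (n - k)) +
        ∑ j ∈ Finset.Icc (k + 1) n, (n.choose j : ℝ) * t ^ j * (1 - t) ^ (n - j) =
      ∑ j ∈ Finset.Icc k (n - 1),
        ((n - 1).choose j : ℝ) * t ^ j * (1 - t) ^ (n - 1 - j) := by
  intro t
  obtain ⟨r, rfl, rfl⟩ : ∃ r, n = 2 * r + 2 ∧ k = r + 1 := by
    obtain ⟨s, rfl⟩ := heven
    exact ⟨s - 1, by omega, by omega⟩
  have heval (m j : ℕ) :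
      (m.choose j : ℝ) * t ^ j * (1 - t) ^ (m - j) = (bernsteinPolynomial ℝ m j).eval t := by
    simp [bernsteinPolynomial]
  have htail := congrArg (eval t) (bernsteinPolynomial.sum_Icc_succ (R := ℝ) (2 * r + 1) (r + 1))
  have hcentral := congrArg (eval t) (bernsteinPolynomial.central_two_mul_add_two (R := ℝ) r)
  simp only [eval_finsetSum, eval_add, eval_mul, eval_X, eval_sub, eval_one, eval_ofNat]
    at htail hcentral
  rw [show 2 * r + 2 - 1 = 2 * r + 1 by omega,
    ← insert_Icc_add_one_left_eq_Icc (by omega : r + 1 ≤ 2 * r + 1), sum_insert (by simp)]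
  simp only [heval]
  linarith
end
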